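/- For any three lines ℓ₁, ℓ₂, ℓ₃ in ℝ³, each at distance exactly 1 from the origin, the minimum of the three pairwise distances dist(ℓᵢ, ℓⱼ) (i < j) is at most √3. Moreover, this bound is attained: there exist three pairwise distinct lines, each at distance 1 from the origin, whose pairwise distances all equal √3 (for example, the three vertical lines through the points (cos(2πk/3), sin(2πk/3), 0), k = 0, 1, 2). Equivalently, via r = d/(2 − d), the maximal common radius R₃ of three pairwise nonintersecting congruent cylinders touching the unit sphere equals 3 + 2√3. -/

import Mathlib

noncomputable section

open Real

/-- Euclidean 3-space. -/
abbrev E3 := EuclideanSpace ℝ (Fin 3)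

/-- The line through `p` with direction `v`. -/
def lineThrough (p v : E3) : Set E3 := {x | ∃ t : ℝ, x = p + t • v}

/-- A line in ℝ³: a one-dimensional affine subspace. -/
def IsLine (ℓ : Set E3) : Prop := ∃ p v : E3, v ≠ 0 ∧ ℓ = lineThrough p v

/-- A line tangent to the unit sphere: a line at distance exactly 1 from the origin. -/
def IsTangentLine (ℓ : Set E3) : Prop := IsLine ℓ ∧ Metric.infDist 0 ℓ = 1

/-- The distance between two subsets of ℝ³: `inf {‖a - b‖ : a ∈ A, b ∈ B}`. -/
def setDist (A B : Set E3) : ℝ := sInf {d : ℝ | ∃ a ∈ A, ∃ b ∈ B, d = dist a b}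

/-- The minimal pairwise distance of a triple of lines. -/
def minDist3 (ℓ₁ ℓ₂ ℓ₃ : Set E3) : ℝ :=
  min (setDist ℓ₁ ℓ₂) (min (setDist ℓ₁ ℓ₃) (setDist ℓ₂ ℓ₃))

/-- The vertical line through the point `(cos (2πk/3), sin (2πk/3), 0)`. -/
def vertLine (k : Fin 3) : Set E3 :=
  lineThrough !₂[Real.cos (2 * π * k / 3), Real.sin (2 * π * k / 3), 0] !₂[0, 0, 1]

/-!
Each tangent line contains a unit vector, namely its foot from the origin, and among three unit
vectors `p, q, r` two are at distance at most `√3`, because the three squared distances and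
`‖p + q + r‖²` add up to `9`. The bound is attained by the vertical lines through the vertices of
an equilateral triangle inscribed in the horizontal unit circle: two parallel lines whose feet
differ by a vector orthogonal to their direction are exactly that far apart (Pythagoras).
The radius statement follows because `d ↦ d / (2 - d)` is increasing for `d < 2`.
-/

open scoped RealInnerProductSpace

section InnerProductSpace

variable {F : Type*} [NormedAddCommGroup F] [InnerProductSpace ℝ F]

theorem norm_le_norm_add_smul_of_inner_eq_zero {w v : F} (h : ⟪w, v⟫ = 0) (t : ℝ) :
    ‖w‖ ≤ ‖w + t • v‖ := by
  have hwv : ⟪w, t • v⟫ = 0 := by rw [real_inner_smul_right, h, mul_zero]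
  have := norm_add_sq_eq_norm_sq_add_norm_sq_real hwv
  nlinarith [norm_nonneg w, norm_nonneg (w + t • v), mul_self_nonneg ‖t • v‖]

theorem dist_sq_add_dist_sq_add_dist_sq_add_norm_add_sq (p q r : F) :
    dist p q ^ 2 + dist p r ^ 2 + dist q r ^ 2 + ‖p + q + r‖ ^ 2
      = 3 * (‖p‖ ^ 2 + ‖q‖ ^ 2 + ‖r‖ ^ 2) := by
  simp only [dist_eq_norm, norm_sub_sq_real, norm_add_sq_real, inner_add_left]
  ring

theorem min_dist_le_sqrt_three {p q r : F} (hp : ‖p‖ = 1) (hq : ‖q‖ = 1) (hr : ‖r‖ = 1) :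
    min (dist p q) (min (dist p r) (dist q r)) ≤ √3 := by
  by_contra! h
  obtain ⟨hpq, hpr, hqr⟩ : √3 < dist p q ∧ √3 < dist p r ∧ √3 < dist q r := by
    simpa only [lt_min_iff] using h
  have sq_gt {d : ℝ} (hd : √3 < d) : 3 < d ^ 2 :=
    (Real.sqrt_lt' ((Real.sqrt_nonneg 3).trans_lt hd)).1 hd
  have := dist_sq_add_dist_sq_add_dist_sq_add_norm_add_sq p q r
  rw [hp, hq, hr] at this
  linarith [sq_gt hpq, sq_gt hpr, sq_gt hqr, sq_nonneg ‖p + q + r‖]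

end InnerProductSpace

section SetDist

variable {A B : Set E3}

theorem setDist_le_dist {a b : E3} (ha : a ∈ A) (hb : b ∈ B) : setDist A B ≤ dist a b :=
  csInf_le ⟨0, by rintro d ⟨x, -, y, -, rfl⟩; exact dist_nonneg⟩ ⟨a, ha, b, hb, rfl⟩

theorem le_setDist {c : ℝ} (hA : A.Nonempty) (hB : B.Nonempty)
    (h : ∀ a ∈ A, ∀ b ∈ B, c ≤ dist a b) : c ≤ setDist A B := by
  obtain ⟨a, ha⟩ := hA
  obtain ⟨b, hb⟩ := hB
  refine le_csInf ⟨_, a, ha, b, hb, rfl⟩ ?_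
  rintro d ⟨x, hx, y, hy, rfl⟩
  exact h x hx y hy

theorem ne_of_setDist_pos (hA : A.Nonempty) (h : 0 < setDist A B) : A ≠ B := by
  rintro rfl
  obtain ⟨a, ha⟩ := hA
  have := setDist_le_dist ha ha
  rw [dist_self] at this
  linarith

end SetDist

section Lines

variable {p q v : E3}

theorem mem_lineThrough_self (p v : E3) : p ∈ lineThrough p v := ⟨0, by simp⟩

theorem isClosed_lineThrough (p v : E3) : IsClosed (lineThrough p v) := by
  have h : lineThrough p v = (· - p) ⁻¹' (Submodule.span ℝ {v} : Set E3) := by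
    ext x
    simp only [lineThrough, Set.mem_preimage, SetLike.mem_coe, Submodule.mem_span_singleton]
    constructor
    · rintro ⟨t, rfl⟩; exact ⟨t, by abel⟩
    · rintro ⟨t, ht⟩; exact ⟨t, by rw [ht, add_sub_cancel]⟩
  rw [h]
  exact (Submodule.span ℝ {v}).closed_of_finiteDimensional.preimage (continuous_sub_right p)

theorem IsTangentLine.exists_mem_norm_eq_one {ℓ : Set E3} (h : IsTangentLine ℓ) :
    ∃ q ∈ ℓ, ‖q‖ = 1 := by
  obtain ⟨⟨p, v, -, rfl⟩, hd⟩ := h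
  obtain ⟨q, hq, hdist⟩ :=
    (isClosed_lineThrough p v).exists_infDist_eq_dist ⟨p, mem_lineThrough_self p v⟩ 0
  exact ⟨q, hq, by rw [← dist_zero_left, ← hdist, hd]⟩

theorem minDist3_le_sqrt_three (ℓ₁ ℓ₂ ℓ₃ : Set E3) (h₁ : IsTangentLine ℓ₁)
    (h₂ : IsTangentLine ℓ₂) (h₃ : IsTangentLine ℓ₃) : minDist3 ℓ₁ ℓ₂ ℓ₃ ≤ √3 := by
  obtain ⟨q₁, hq₁, hn₁⟩ := h₁.exists_mem_norm_eq_one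
  obtain ⟨q₂, hq₂, hn₂⟩ := h₂.exists_mem_norm_eq_one
  obtain ⟨q₃, hq₃, hn₃⟩ := h₃.exists_mem_norm_eq_one
  refine le_trans ?_ (min_dist_le_sqrt_three hn₁ hn₂ hn₃)
  exact min_le_min (setDist_le_dist hq₁ hq₂)
    (min_le_min (setDist_le_dist hq₁ hq₃) (setDist_le_dist hq₂ hq₃))

theorem infDist_zero_lineThrough (h : ⟪p, v⟫ = 0) : Metric.infDist 0 (lineThrough p v) = ‖p‖ := by
  refine le_antisymm ?_ ?_
  · simpa using Metric.infDist_le_dist_of_mem (x := 0) (mem_lineThrough_self p v)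
  · rw [Metric.le_infDist ⟨p, mem_lineThrough_self p v⟩]
    rintro _ ⟨t, rfl⟩
    simpa using norm_le_norm_add_smul_of_inner_eq_zero h t

theorem setDist_lineThrough (h : ⟪p - q, v⟫ = 0) :
    setDist (lineThrough p v) (lineThrough q v) = dist p q := by
  refine le_antisymm (setDist_le_dist (mem_lineThrough_self p v) (mem_lineThrough_self q v)) ?_
  refine le_setDist ⟨p, mem_lineThrough_self p v⟩ ⟨q, mem_lineThrough_self q v⟩ ?_
  rintro _ ⟨s, rfl⟩ _ ⟨t, rfl⟩
  rw [dist_eq_norm, dist_eq_norm, show p + s • v - (q + t • v) = p - q + (s - t) • v by module]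
  exact norm_le_norm_add_smul_of_inner_eq_zero h (s - t)

theorem isTangentLine_lineThrough (hv : v ≠ 0) (h : ⟪p, v⟫ = 0) (hp : ‖p‖ = 1) :
    IsTangentLine (lineThrough p v) :=
  ⟨⟨p, v, hv, rfl⟩, by rw [infDist_zero_lineThrough h, hp]⟩

end Lines

def trianglePoint (k : Fin 3) : E3 := !₂[cos (2 * π * k / 3), sin (2 * π * k / 3), 0]

theorem vertLine_eq (k : Fin 3) : vertLine k = lineThrough (trianglePoint k) !₂[0, 0, 1] := rfl

theorem trianglePoint_zero : trianglePoint 0 = !₂[1, 0, 0] := by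
  simp [trianglePoint]

theorem trianglePoint_one : trianglePoint 1 = !₂[-(1 / 2), √3 / 2, 0] := by
  rw [trianglePoint, show 2 * π * ((1 : Fin 3) : ℕ) / 3 = π - π / 3 by simp; ring,
    cos_pi_sub, sin_pi_sub, cos_pi_div_three, sin_pi_div_three]

theorem trianglePoint_two : trianglePoint 2 = !₂[-(1 / 2), -(√3 / 2), 0] := by
  rw [trianglePoint, show 2 * π * ((2 : Fin 3) : ℕ) / 3 = π / 3 + π by simp; ring,
    cos_add_pi, sin_add_pi, cos_pi_div_three, sin_pi_div_three]

theorem inner_trianglePoint (k : Fin 3) : ⟪trianglePoint k, !₂[0, 0, 1]⟫ = 0 := by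
  simp [trianglePoint, EuclideanSpace.inner_eq_star_dotProduct]

theorem norm_trianglePoint (k : Fin 3) : ‖trianglePoint k‖ = 1 := by
  simp [trianglePoint, EuclideanSpace.norm_eq, Fin.sum_univ_three]

theorem dist_trianglePoint {k l : Fin 3} (h : k ≠ l) :
    dist (trianglePoint k) (trianglePoint l) = √3 := by
  have h3 : √3 ^ 2 = 3 := Real.sq_sqrt (by norm_num)
  rw [EuclideanSpace.dist_eq]
  congr 1
  fin_cases k <;> fin_cases l <;>
    simp [trianglePoint_zero, trianglePoint_one, trianglePoint_two, Fin.sum_univ_three,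
      Real.dist_eq, sq_abs] at h ⊢ <;>
    nlinarith [h3]

theorem isTangentLine_vertLine (k : Fin 3) : IsTangentLine (vertLine k) :=
  isTangentLine_lineThrough (by simp) (inner_trianglePoint k) (norm_trianglePoint k)

theorem setDist_vertLine {k l : Fin 3} (h : k ≠ l) : setDist (vertLine k) (vertLine l) = √3 := by
  rw [vertLine_eq, vertLine_eq, setDist_lineThrough, dist_trianglePoint h]
  rw [inner_sub_left, inner_trianglePoint, inner_trianglePoint, sub_zero]

theorem vertLine_ne {k l : Fin 3} (h : k ≠ l) : vertLine k ≠ vertLine l :=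
  ne_of_setDist_pos ⟨_, mem_lineThrough_self _ _⟩ (by rw [setDist_vertLine h]; positivity)

theorem minDist3_vertLine : minDist3 (vertLine 0) (vertLine 1) (vertLine 2) = √3 := by
  rw [minDist3, setDist_vertLine (by decide), setDist_vertLine (by decide),
    setDist_vertLine (by decide), min_self, min_self]

theorem sqrt_three_lt_two : √3 < 2 := (Real.sqrt_lt' two_pos).2 (by norm_num)

theorem div_two_sub_le_div_two_sub {a b : ℝ} (hab : a ≤ b) (hb : b < 2) :
    a / (2 - a) ≤ b / (2 - b) := by
  rw [div_le_div_iff₀ (by linarith) (by linarith)]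
  linarith

theorem sqrt_three_div_two_sub_sqrt_three : √3 / (2 - √3) = 3 + 2 * √3 := by
  rw [div_eq_iff (sub_ne_zero.2 sqrt_three_lt_two.ne')]
  linear_combination 2 * Real.sq_sqrt (show (0 : ℝ) ≤ 3 by norm_num)

theorem stmt1 :
    (∀ ℓ₁ ℓ₂ ℓ₃ : Set E3, IsTangentLine ℓ₁ → IsTangentLine ℓ₂ → IsTangentLine ℓ₃ →
      minDist3 ℓ₁ ℓ₂ ℓ₃ ≤ Real.sqrt 3) ∧
    (∃ ℓ₁ ℓ₂ ℓ₃ : Set E3, IsTangentLine ℓ₁ ∧ IsTangentLine ℓ₂ ∧ IsTangentLine ℓ₃ ∧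
      ℓ₁ ≠ ℓ₂ ∧ ℓ₁ ≠ ℓ₃ ∧ ℓ₂ ≠ ℓ₃ ∧
      setDist ℓ₁ ℓ₂ = Real.sqrt 3 ∧ setDist ℓ₁ ℓ₃ = Real.sqrt 3 ∧
      setDist ℓ₂ ℓ₃ = Real.sqrt 3) ∧
    ((∀ k : Fin 3, IsTangentLine (vertLine k)) ∧
      (∀ k l : Fin 3, k ≠ l → vertLine k ≠ vertLine l ∧
        setDist (vertLine k) (vertLine l) = Real.sqrt 3)) ∧
    IsGreatest {r : ℝ | ∃ ℓ₁ ℓ₂ ℓ₃ : Set E3,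
        IsTangentLine ℓ₁ ∧ IsTangentLine ℓ₂ ∧ IsTangentLine ℓ₃ ∧
        r = minDist3 ℓ₁ ℓ₂ ℓ₃ / (2 - minDist3 ℓ₁ ℓ₂ ℓ₃)}
      (3 + 2 * Real.sqrt 3) := by
  refine ⟨minDist3_le_sqrt_three,
    ⟨vertLine 0, vertLine 1, vertLine 2, isTangentLine_vertLine 0, isTangentLine_vertLine 1,
      isTangentLine_vertLine 2,
      vertLine_ne (by decide), vertLine_ne (by decide), vertLine_ne (by decide),
      setDist_vertLine (by decide), setDist_vertLine (by decide), setDist_vertLine (by decide)⟩,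
    ⟨isTangentLine_vertLine, fun k l h => ⟨vertLine_ne h, setDist_vertLine h⟩⟩,
    ⟨vertLine 0, vertLine 1, vertLine 2, isTangentLine_vertLine 0, isTangentLine_vertLine 1,
      isTangentLine_vertLine 2,
      by rw [minDist3_vertLine, sqrt_three_div_two_sub_sqrt_three]⟩, ?_⟩
  rintro r ⟨ℓ₁, ℓ₂, ℓ₃, h₁, h₂, h₃, rfl⟩
  rw [← sqrt_three_div_two_sub_sqrt_three]
  exact div_two_sub_le_div_two_sub (minDist3_le_sqrt_three _ _ _ h₁ h₂ h₃) sqrt_three_lt_two
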